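/- arXiv:1611.02305 — 4 statements merged into one kernel-verified Lean document; each statement's English description precedes it below -/
import Mathlib

section
/- Let V be a finite node set and let w, w' : V × V → ℝ both satisfy w(u,v) ≥ 0 for all u,v and Σ_{u ∈ V} w(u,v) ≤ 1 for every v (and likewise for w'). Then for every seed set S ⊆ V and every node u₀ ∈ V, |F^w_{u₀}(S) − F^{w'}_{u₀}(S)| ≤ Σ_{(u,v) ∈ V × V} |w(u,v) − w'(u,v)|; that is, the live-edge DLT influence is 1-Lipschitz in the weights with respect to the L1 norm. -/
open Classical

variable {V : Type*} [Fintype V] [DecidableEq V]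

/-- `q^w_v(u) = w(u,v)` for `u ∈ V`, and `q^w_v(⊥) = 1 − Σ_u w(u,v)`. -/
noncomputable def dltQ (w : V → V → ℝ) (v : V) : Option V → ℝ
  | some u => w u v
  | none => 1 - ∑ u, w u v

/-- The probability `p^w(X) = Π_v q^w_v(X(v))` of an assignment `X : V → V ∪ {⊥}`. -/
noncomputable def dltProb (w : V → V → ℝ) (X : V → Option V) : ℝ :=
  ∏ v, dltQ w v (X v)

/-- `u₀` is `X`-reachable from `S`: there are `v₀ ∈ S, v₁, …, v_k = u₀` with
`X(v_i) = v_{i−1}` for `1 ≤ i ≤ k`. -/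
def dltReach (X : V → Option V) (S : Finset V) (u₀ : V) : Prop :=
  ∃ s ∈ S, Relation.ReflTransGen (fun a b => X b = some a) s u₀

open Classical in
/-- The live-edge DLT influence `F^w_{u₀}(S)`. -/
noncomputable def dltInf (w : V → V → ℝ) (S : Finset V) (u₀ : V) : ℝ :=
  ∑ X : V → Option V, dltProb w X * (if dltReach X S u₀ then 1 else 0)

lemma dltQ_nonneg (w : V → V → ℝ) (h0 : ∀ u v, 0 ≤ w u v) (h1 : ∀ v, ∑ u, w u v ≤ 1)
    (v : V) (o : Option V) : 0 ≤ dltQ w v o := by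
  cases o with
  | none => simp only [dltQ]; linarith [h1 v]
  | some u => exact h0 u v

lemma dltQ_sum (w : V → V → ℝ) (v : V) : ∑ o : Option V, dltQ w v o = 1 := by
  rw [Fintype.sum_option]
  simp only [dltQ]
  ring

lemma dltQ_congr (f g : V → V → ℝ) (v₀ : V) (hagree : ∀ u v, v ≠ v₀ → f u v = g u v)
    (v : V) (hv : v ≠ v₀) (o : Option V) : dltQ f v o = dltQ g v o := by
  cases o with
  | none => simp only [dltQ]; congr 1; exact Finset.sum_congr rfl fun u _ => hagree u v hv
  | some u => exact hagree u v hv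

/-- The single-column case: if `f` and `g` agree except on column `v₀`, the influence
changes by at most the L1 change of that column. -/
lemma dltInf_single_column (f g : V → V → ℝ)
    (hf0 : ∀ u v, 0 ≤ f u v) (hf1 : ∀ v, ∑ u, f u v ≤ 1)
    (hg0 : ∀ u v, 0 ≤ g u v) (hg1 : ∀ v, ∑ u, g u v ≤ 1)
    (v₀ : V) (hagree : ∀ u v, v ≠ v₀ → f u v = g u v)
    (S : Finset V) (u₀ : V) :
    |dltInf f S u₀ - dltInf g S u₀| ≤ ∑ u, |f u v₀ - g u v₀| := by
  classical
  set I : (V → Option V) → ℝ := fun X => if dltReach X S u₀ then 1 else 0 with hI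
  set R : (V → Option V) → ℝ := fun X => ∏ v ∈ Finset.univ.erase v₀, dltQ g v (X v) with hR
  have hI01 : ∀ X, 0 ≤ I X ∧ I X ≤ 1 := by
    intro X; simp only [hI]; split <;> norm_num
  have hR0 : ∀ X, 0 ≤ R X := fun X =>
    Finset.prod_nonneg fun v _ => dltQ_nonneg g hg0 hg1 v (X v)
  set B : Option V → ℝ := fun o =>
    ∑ X : V → Option V, (if X v₀ = o then R X * I X else 0) with hB
  -- Step 1 : difference as a single sum
  have step1 : dltInf f S u₀ - dltInf g S u₀ =
      ∑ X : V → Option V, (dltQ f v₀ (X v₀) - dltQ g v₀ (X v₀)) * (R X * I X) := by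
    rw [dltInf, dltInf, ← Finset.sum_sub_distrib]
    refine Finset.sum_congr rfl fun X _ => ?_
    have hprodf : dltProb f X = dltQ f v₀ (X v₀) * R X := by
      rw [dltProb, ← Finset.mul_prod_erase _ _ (Finset.mem_univ v₀), hR]
      congr 1
      exact Finset.prod_congr rfl fun v hv =>
        dltQ_congr f g v₀ hagree v (Finset.mem_erase.mp hv).1 (X v)
    have hprodg : dltProb g X = dltQ g v₀ (X v₀) * R X := by
      rw [dltProb, ← Finset.mul_prod_erase _ _ (Finset.mem_univ v₀), hR]
    rw [hprodf, hprodg]; ring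
  -- Step 2 : rearrange as a sum over the value at v₀
  have step2 : dltInf f S u₀ - dltInf g S u₀ =
      ∑ o : Option V, (dltQ f v₀ o - dltQ g v₀ o) * B o := by
    rw [step1]
    simp only [hB, Finset.mul_sum]
    rw [Finset.sum_comm]
    refine Finset.sum_congr rfl fun X _ => ?_
    rw [Finset.sum_congr rfl (fun o _ => by
      rw [mul_ite, mul_zero] : ∀ o ∈ Finset.univ, _ = if X v₀ = o then
        (dltQ f v₀ o - dltQ g v₀ o) * (R X * I X) else 0)]
    rw [Finset.sum_ite_eq Finset.univ (X v₀)
      (fun o => (dltQ f v₀ o - dltQ g v₀ o) * (R X * I X))]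
    simp
  -- Step 3 : 0 ≤ B o ≤ 1
  have hB0 : ∀ o, 0 ≤ B o := by
    intro o
    refine Finset.sum_nonneg fun X _ => ?_
    split
    · exact mul_nonneg (hR0 X) (hI01 X).1
    · exact le_refl 0
  have hB1 : ∀ o, B o ≤ 1 := by
    intro o
    set F : V → Option V → ℝ := fun v o' =>
      if v = v₀ then (if o' = o then 1 else 0) else dltQ g v o' with hF
    have hle : B o ≤ ∑ X : V → Option V, ∏ v, F v (X v) := by
      refine Finset.sum_le_sum fun X _ => ?_
      have hFX : ∏ v, F v (X v) = (if X v₀ = o then 1 else 0) * R X := by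
        rw [← Finset.mul_prod_erase _ _ (Finset.mem_univ v₀), hR]
        congr 1
        · simp [hF]
        · exact Finset.prod_congr rfl fun v hv => by
            simp [hF, (Finset.mem_erase.mp hv).1]
      rw [hFX]
      split
      · rw [one_mul]
        calc R X * I X ≤ R X * 1 := mul_le_mul_of_nonneg_left (hI01 X).2 (hR0 X)
          _ = R X := mul_one _
      · rw [zero_mul]
    have heq : ∑ X : V → Option V, ∏ v, F v (X v) = ∏ v, ∑ o' : Option V, F v o' := by
      rw [Finset.prod_univ_sum]; simp
    have hone : ∏ v, ∑ o' : Option V, F v o' = 1 := by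
      refine Finset.prod_eq_one fun v _ => ?_
      by_cases hv : v = v₀
      · simp [hF, hv, Finset.sum_ite_eq' Finset.univ o (fun _ => (1 : ℝ))]
      · simp only [hF, if_neg hv]; exact dltQ_sum g v
    calc B o ≤ _ := hle
      _ = 1 := by rw [heq, hone]
  -- Step 4 : conclusion
  have hdnone : dltQ f v₀ none - dltQ g v₀ none = -∑ u, (f u v₀ - g u v₀) := by
    simp only [dltQ, Finset.sum_sub_distrib]; ring
  rw [step2, Fintype.sum_option, hdnone]
  have hfinal : -(∑ u, (f u v₀ - g u v₀)) * B none
      + ∑ u, (dltQ f v₀ (some u) - dltQ g v₀ (some u)) * B (some u)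
      = ∑ u, (f u v₀ - g u v₀) * (B (some u) - B none) := by
    simp only [dltQ, mul_sub, Finset.sum_sub_distrib, ← Finset.sum_mul]
    ring
  rw [hfinal]
  calc |∑ u, (f u v₀ - g u v₀) * (B (some u) - B none)|
      ≤ ∑ u, |(f u v₀ - g u v₀) * (B (some u) - B none)| := Finset.abs_sum_le_sum_abs _ _
    _ ≤ ∑ u, |f u v₀ - g u v₀| := by
        refine Finset.sum_le_sum fun u _ => ?_
        rw [abs_mul]
        have hBd : |B (some u) - B none| ≤ 1 := by
          rw [abs_sub_le_iff]
          constructor <;> linarith [hB0 (some u), hB1 (some u), hB0 none, hB1 none]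
        calc |f u v₀ - g u v₀| * |B (some u) - B none|
            ≤ |f u v₀ - g u v₀| * 1 := mul_le_mul_of_nonneg_left hBd (abs_nonneg _)
          _ = _ := mul_one _

/-- The live-edge DLT influence is 1-Lipschitz in the weights w.r.t. the L1 norm. -/
theorem dlt_influence_lipschitz (w w' : V → V → ℝ)
    (hw0 : ∀ u v, 0 ≤ w u v) (hw1 : ∀ v, ∑ u, w u v ≤ 1)
    (hw'0 : ∀ u v, 0 ≤ w' u v) (hw'1 : ∀ v, ∑ u, w' u v ≤ 1)
    (S : Finset V) (u₀ : V) :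
    |dltInf w S u₀ - dltInf w' S u₀| ≤ ∑ p : V × V, |w p.1 p.2 - w' p.1 p.2| := by
  classical
  set m : Finset V → V → V → ℝ := fun T u v => if v ∈ T then w u v else w' u v with hm
  have hm0 : ∀ T u v, 0 ≤ m T u v := by
    intro T u v; simp only [hm]; split
    · exact hw0 u v
    · exact hw'0 u v
  have hm1 : ∀ T v, ∑ u, m T u v ≤ 1 := by
    intro T v; simp only [hm]; split
    · exact hw1 v
    · exact hw'1 v
  have key : ∀ T : Finset V,
      |dltInf (m T) S u₀ - dltInf w' S u₀| ≤ ∑ v ∈ T, ∑ u, |w u v - w' u v| := by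
    intro T
    induction T using Finset.induction with
    | empty =>
      have : m ∅ = w' := by funext u v; simp [hm]
      simp [this]
    | @insert a T ha ih =>
      have hstep : |dltInf (m (insert a T)) S u₀ - dltInf (m T) S u₀|
          ≤ ∑ u, |m (insert a T) u a - m T u a| := by
        refine dltInf_single_column _ _ (hm0 _) (hm1 _) (hm0 _) (hm1 _) a ?_ S u₀
        intro u v hv
        simp only [hm, Finset.mem_insert]
        congr 1
        simp [hv]
      have hcol : ∀ u, m (insert a T) u a - m T u a = w u a - w' u a := by
        intro u; simp [hm, ha]
      rw [Finset.sum_insert ha]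
      calc |dltInf (m (insert a T)) S u₀ - dltInf w' S u₀|
          ≤ |dltInf (m (insert a T)) S u₀ - dltInf (m T) S u₀|
            + |dltInf (m T) S u₀ - dltInf w' S u₀| := abs_sub_le _ _ _
        _ ≤ (∑ u, |w u a - w' u a|) + ∑ v ∈ T, ∑ u, |w u v - w' u v| := by
            refine add_le_add ?_ ih
            calc |dltInf (m (insert a T)) S u₀ - dltInf (m T) S u₀|
                ≤ ∑ u, |m (insert a T) u a - m T u a| := hstep
              _ = ∑ u, |w u a - w' u a| := by
                  exact Finset.sum_congr rfl fun u _ => by rw [hcol u]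
  have huniv := key Finset.univ
  have hmu : m Finset.univ = w := by funext u v; simp [hm]
  rw [hmu] at huniv
  calc |dltInf w S u₀ - dltInf w' S u₀|
      ≤ ∑ v, ∑ u, |w u v - w' u v| := huniv
    _ = ∑ p : V × V, |w p.1 p.2 - w' p.1 p.2| := by
        rw [Fintype.sum_prod_type, Finset.sum_comm]
end

section
/- Let V be a finite node set, E ⊆ V × V a set of directed edges, and w, w' : E → ℝ with w(e), w'(e) ∈ [0,1] for all e ∈ E. Then for every seed set S ⊆ V and every node u ∈ V, |F^w_u(S) − F^{w'}_u(S)| ≤ Σ_{e ∈ E} |w(e) − w'(e)|; that is, the live-edge DIC influence is 1-Lipschitz in the edge weights with respect to the L1 norm. -/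
open Classical

variable {V : Type*} [DecidableEq V]

/-- `u` is `H`-reachable from `S`: `u ∈ S` or a directed path of edges of `H` leads
from some node of `S` to `u`. -/
def dicReach (H : Finset (V × V)) (S : Finset V) (u : V) : Prop :=
  ∃ s ∈ S, Relation.ReflTransGen (fun a b => (a, b) ∈ H) s u

open Classical in
/-- The live-edge DIC influence
`F^w_u(S) = Σ_{H ⊆ E} (Π_{e ∈ H} w(e)) (Π_{e ∈ E∖H} (1 − w(e))) · 1[u is H-reachable from S]`. -/
noncomputable def dicInf (E : Finset (V × V)) (w : V × V → ℝ) (S : Finset V) (u : V) : ℝ :=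
  ∑ H ∈ E.powerset,
    (∏ e ∈ H, w e) * (∏ e ∈ E \ H, (1 - w e)) * (if dicReach H S u then 1 else 0)

/-!
`randomSubsetExpect E p f` is the expectation of `f H` for the random subset `H ⊆ E` that
contains each `e` independently with probability `p e`; the influence is the case
`f H = 1[u is H-reachable from S]`. Conditioning on whether a new element `a` lies in `H`
turns the expectation over `insert a s` into one over `s` of
`g H = (1 - p a) f H + p a f (insert a H)`, which is affine in `p a` with slope
`f (insert a H) - f H`. Changing the weights one element at a time, each change moves the
expectation by at most `|p a - p' a|` times the oscillation of `f`.
-/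

section RandomSubset

variable {α : Type*} [DecidableEq α]

noncomputable def randomSubsetExpect (E : Finset α) (p : α → ℝ) (f : Finset α → ℝ) : ℝ :=
  ∑ H ∈ E.powerset, (∏ e ∈ H, p e) * (∏ e ∈ E \ H, (1 - p e)) * f H

lemma sum_randomSubset_weights (E : Finset α) (p : α → ℝ) :
    ∑ H ∈ E.powerset, (∏ e ∈ H, p e) * ∏ e ∈ E \ H, (1 - p e) = 1 := by
  rw [← Finset.prod_add]
  simp

lemma randomSubset_weight_nonneg {E H : Finset α} {p : α → ℝ}
    (hp : ∀ e ∈ E, p e ∈ Set.Icc (0 : ℝ) 1) (hH : H ∈ E.powerset) :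
    0 ≤ (∏ e ∈ H, p e) * ∏ e ∈ E \ H, (1 - p e) := by
  have hHE := Finset.mem_powerset.mp hH
  exact mul_nonneg (Finset.prod_nonneg fun e he => (hp e (hHE he)).1)
    (Finset.prod_nonneg fun e he => sub_nonneg.mpr (hp e (Finset.mem_sdiff.mp he).1).2)

lemma randomSubsetExpect_empty (p : α → ℝ) (f : Finset α → ℝ) :
    randomSubsetExpect ∅ p f = f ∅ := by
  simp [randomSubsetExpect]

lemma randomSubsetExpect_insert {a : α} {s : Finset α} (ha : a ∉ s) (p : α → ℝ)
    (f : Finset α → ℝ) :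
    randomSubsetExpect (insert a s) p f =
      randomSubsetExpect s p (fun H => (1 - p a) * f H + p a * f (insert a H)) := by
  rw [randomSubsetExpect, randomSubsetExpect, Finset.sum_powerset_insert ha,
    ← Finset.sum_add_distrib]
  refine Finset.sum_congr rfl fun H hH => ?_
  have haH : a ∉ H := fun h => ha (Finset.mem_powerset.mp hH h)
  have haSH : a ∉ s \ H := fun h => ha (Finset.mem_sdiff.mp h).1
  rw [Finset.insert_sdiff_of_notMem _ haH, Finset.insert_sdiff_insert,
    Finset.sdiff_insert_of_notMem ha, Finset.prod_insert haH, Finset.prod_insert haSH]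
  ring

lemma randomSubsetExpect_sub (E : Finset α) (p : α → ℝ) (f g : Finset α → ℝ) :
    randomSubsetExpect E p f - randomSubsetExpect E p g =
      randomSubsetExpect E p (fun H => f H - g H) := by
  simp only [randomSubsetExpect, ← Finset.sum_sub_distrib, mul_sub]

lemma abs_randomSubsetExpect_le {E : Finset α} {p : α → ℝ}
    (hp : ∀ e ∈ E, p e ∈ Set.Icc (0 : ℝ) 1) {f : Finset α → ℝ} {c : ℝ}
    (hf : ∀ H, |f H| ≤ c) : |randomSubsetExpect E p f| ≤ c :=
  calc |randomSubsetExpect E p f|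
      ≤ ∑ H ∈ E.powerset, |(∏ e ∈ H, p e) * (∏ e ∈ E \ H, (1 - p e)) * f H| :=
        Finset.abs_sum_le_sum_abs _ _
    _ ≤ ∑ H ∈ E.powerset, (∏ e ∈ H, p e) * (∏ e ∈ E \ H, (1 - p e)) * c := by
        refine Finset.sum_le_sum fun H hH => ?_
        rw [abs_mul, abs_of_nonneg (randomSubset_weight_nonneg hp hH)]
        exact mul_le_mul_of_nonneg_left (hf H) (randomSubset_weight_nonneg hp hH)
    _ = c := by rw [← Finset.sum_mul, sum_randomSubset_weights, one_mul]

lemma abs_randomSubsetExpect_sub_le {E : Finset α} {p p' : α → ℝ}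
    (hp : ∀ e ∈ E, p e ∈ Set.Icc (0 : ℝ) 1) (hp' : ∀ e ∈ E, p' e ∈ Set.Icc (0 : ℝ) 1)
    {f : Finset α → ℝ} {c : ℝ} (hf : ∀ H K, |f H - f K| ≤ c) :
    |randomSubsetExpect E p f - randomSubsetExpect E p' f| ≤ c * ∑ e ∈ E, |p e - p' e| := by
  induction E using Finset.induction_on generalizing f with
  | empty => simp [randomSubsetExpect_empty]
  | @insert a s ha ih =>
    have hpa := hp a (Finset.mem_insert_self a s)
    have hp's := fun e he => hp' e (Finset.mem_insert_of_mem he)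
    set g : Finset α → ℝ := fun H => (1 - p a) * f H + p a * f (insert a H)
    have hg : ∀ H K, |g H - g K| ≤ c := fun H K =>
      calc |g H - g K| = |(1 - p a) * (f H - f K) + p a * (f (insert a H) - f (insert a K))| := by
            congr 1; simp only [g]; ring
        _ ≤ (1 - p a) * c + p a * c := by
            refine (abs_add_le _ _).trans (add_le_add ?_ ?_) <;>
              rw [abs_mul, abs_of_nonneg (by linarith [hpa.1, hpa.2])] <;>
              exact mul_le_mul_of_nonneg_left (hf _ _) (by linarith [hpa.1, hpa.2])
        _ = c := by ring
    have hstep : |randomSubsetExpect s p' g -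
        randomSubsetExpect s p' (fun H => (1 - p' a) * f H + p' a * f (insert a H))| ≤
          c * |p a - p' a| := by
      rw [randomSubsetExpect_sub]
      refine abs_randomSubsetExpect_le hp's fun H => ?_
      calc |g H - ((1 - p' a) * f H + p' a * f (insert a H))|
          = |p a - p' a| * |f (insert a H) - f H| := by
            rw [← abs_mul]; congr 1; simp only [g]; ring
        _ ≤ c * |p a - p' a| := by
            rw [mul_comm c]; exact mul_le_mul_of_nonneg_left (hf _ _) (abs_nonneg _)
    rw [randomSubsetExpect_insert ha, randomSubsetExpect_insert ha, Finset.sum_insert ha]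
    calc _ ≤ |randomSubsetExpect s p g - randomSubsetExpect s p' g| +
            |randomSubsetExpect s p' g -
              randomSubsetExpect s p' (fun H => (1 - p' a) * f H + p' a * f (insert a H))| :=
          abs_sub_le _ _ _
      _ ≤ c * ∑ e ∈ s, |p e - p' e| + c * |p a - p' a| :=
          add_le_add (ih (fun e he => hp e (Finset.mem_insert_of_mem he)) hp's hg) hstep
      _ = _ := by ring

end RandomSubset

lemma dicInf_eq_randomSubsetExpect (E : Finset (V × V)) (w : V × V → ℝ) (S : Finset V) (u : V) :
    dicInf E w S u = randomSubsetExpect E w (fun H => if dicReach H S u then 1 else 0) :=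
  rfl

/-- The live-edge DIC influence is 1-Lipschitz in the edge weights w.r.t. the L1 norm. -/
theorem dic_influence_lipschitz (E : Finset (V × V)) (w w' : V × V → ℝ)
    (hw : ∀ e ∈ E, w e ∈ Set.Icc (0 : ℝ) 1) (hw' : ∀ e ∈ E, w' e ∈ Set.Icc (0 : ℝ) 1)
    (S : Finset V) (u : V) :
    |dicInf E w S u - dicInf E w' S u| ≤ ∑ e ∈ E, |w e - w' e| := by
  have hreach : ∀ H K : Finset (V × V),
      |(if dicReach H S u then (1 : ℝ) else 0) - if dicReach K S u then 1 else 0| ≤ 1 := by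
    intro H K
    split_ifs <;> norm_num
  simpa only [dicInf_eq_randomSubsetExpect, one_mul] using
    abs_randomSubsetExpect_sub_le hw hw' hreach
end

section
/- Let (Ω, F, μ) be a probability space, let η ∈ (0,1) and r̄ > 0, and let r, r̂ ∈ [r̄(1−η), r̄(1+η)] (so in particular r, r̂ > 0). Let A, B : Ω → ℝ be square-integrable random variables with 0 ≤ A ≤ r̂ almost everywhere, and suppose ∫ (A − B)² dμ ≤ ε̂ for some ε̂ ≥ 0. Then ∫ (A/r̂ − B/r)² dμ ≤ ε̂/r² + 4η√ε̂/(r(1−η)) + 4η²/(1−η)². -/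
/-!
Write `A/r̂ − B/r = (A − B)/r + (A/r̂ − A/r)`. Since `0 ≤ A ≤ r̂` and both rates lie within relative
error `η` of `r̄`, the second summand is bounded by `2η/(1−η)` uniformly. The triangle inequality in
`L²` then gives `‖A/r̂ − B/r‖₂ ≤ √ε̂/r + 2η/(1−η)`, and the claimed bound is the square of the
right-hand side.
-/

open MeasureTheory ProbabilityTheory

section IntegralBounds

variable {Ω : Type*} [MeasurableSpace Ω] {μ : Measure Ω} [IsProbabilityMeasure μ] {f g : Ω → ℝ}

theorem integral_abs_le_sqrt_integral_sq (hf : MemLp f 2 μ) :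
    ∫ ω, |f ω| ∂μ ≤ √(∫ ω, f ω ^ 2 ∂μ) := by
  have hvar := variance_nonneg (|f|) μ
  rw [variance_eq_sub hf.abs] at hvar
  simp only [Pi.pow_apply, Pi.abs_apply, sq_abs] at hvar
  exact Real.le_sqrt_of_sq_le (by linarith)

theorem sq_add_le_of_abs_le {x y c : ℝ} (h : |y| ≤ c) :
    (x + y) ^ 2 ≤ x ^ 2 + 2 * c * |x| + c ^ 2 := by
  have hxy : x * y ≤ c * |x| := by
    calc x * y ≤ |x| * |y| := by rw [← abs_mul]; exact le_abs_self _
      _ ≤ c * |x| := by rw [mul_comm]; gcongr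
  have hy : y ^ 2 ≤ c ^ 2 := by
    rw [← sq_abs y]; exact pow_le_pow_left₀ (abs_nonneg y) h 2
  nlinarith

theorem integral_sq_add_le_of_abs_le (hf : MemLp f 2 μ) (hg : AEStronglyMeasurable g μ) {c : ℝ}
    (hgc : ∀ᵐ ω ∂μ, |g ω| ≤ c) :
    ∫ ω, (f ω + g ω) ^ 2 ∂μ ≤ (√(∫ ω, f ω ^ 2 ∂μ) + c) ^ 2 := by
  obtain ⟨ω₀, hω₀⟩ := hgc.exists
  have hc : 0 ≤ c := (abs_nonneg _).trans hω₀
  have hg2 : MemLp g 2 μ := MemLp.of_bound hg c hgc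
  have hf2 : Integrable (fun ω => f ω ^ 2) μ := hf.integrable_sq
  have hf1 : Integrable (fun ω => |f ω|) μ := (hf.integrable one_le_two).abs
  calc ∫ ω, (f ω + g ω) ^ 2 ∂μ
      ≤ ∫ ω, (f ω ^ 2 + 2 * c * |f ω| + c ^ 2) ∂μ :=
        integral_mono_ae (hf.add hg2).integrable_sq
          ((hf2.add (hf1.const_mul _)).add (integrable_const _))
          (hgc.mono fun ω h => sq_add_le_of_abs_le h)
    _ = ∫ ω, f ω ^ 2 ∂μ + 2 * c * ∫ ω, |f ω| ∂μ + c ^ 2 := by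
        have hf21 : Integrable (fun ω => f ω ^ 2 + 2 * c * |f ω|) μ := hf2.add (hf1.const_mul _)
        rw [integral_add hf21 (integrable_const _), integral_add hf2 (hf1.const_mul _),
          integral_const_mul, integral_const]
        simp
    _ ≤ ∫ ω, f ω ^ 2 ∂μ + 2 * c * √(∫ ω, f ω ^ 2 ∂μ) + c ^ 2 := by
        gcongr; exact integral_abs_le_sqrt_integral_sq hf
    _ = (√(∫ ω, f ω ^ 2 ∂μ) + c) ^ 2 := by
        rw [add_sq, Real.sq_sqrt (integral_nonneg fun ω => sq_nonneg (f ω))]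
        ring

end IntegralBounds

theorem abs_div_sub_div_le_of_mem_Icc {η rbar r rhat a : ℝ} (hη : η < 1) (hrbar : 0 < rbar)
    (hr : r ∈ Set.Icc (rbar * (1 - η)) (rbar * (1 + η)))
    (hrhat : rhat ∈ Set.Icc (rbar * (1 - η)) (rbar * (1 + η)))
    (ha0 : 0 ≤ a) (hale : a ≤ rhat) :
    |a / rhat - a / r| ≤ 2 * η / (1 - η) := by
  have hr0 : 0 < rbar * (1 - η) := mul_pos hrbar (by linarith)
  have hrpos : 0 < r := hr0.trans_le hr.1
  have hrhatpos : 0 < rhat := hr0.trans_le hrhat.1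
  have hdiff : |r - rhat| ≤ 2 * η * rbar := by
    rw [abs_le]; constructor <;> nlinarith [hr.1, hr.2, hrhat.1, hrhat.2]
  calc |a / rhat - a / r| = a / rhat * (|r - rhat| / r) := by
        rw [show a / rhat - a / r = a / rhat * ((r - rhat) / r) by field_simp,
          abs_mul, abs_of_nonneg (div_nonneg ha0 hrhatpos.le), abs_div, abs_of_pos hrpos]
    _ ≤ 1 * (2 * η * rbar / (rbar * (1 - η))) := by
        gcongr
        · exact div_le_one_of_le₀ hale hrhatpos.le
        · exact (abs_nonneg _).trans hdiff
        · exact hr.1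
    _ = 2 * η / (1 - η) := by field_simp

theorem rescaled_error_bound_general {Ω : Type*} [MeasurableSpace Ω] (μ : Measure Ω)
    [IsProbabilityMeasure μ] (η rbar r rhat εhat : ℝ)
    (hη : η ∈ Set.Ioo (0 : ℝ) 1) (hrbar : 0 < rbar)
    (hr : r ∈ Set.Icc (rbar * (1 - η)) (rbar * (1 + η)))
    (hrhat : rhat ∈ Set.Icc (rbar * (1 - η)) (rbar * (1 + η)))
    (A B : Ω → ℝ) (hA : MemLp A 2 μ) (hB : MemLp B 2 μ)
    (hA0 : ∀ᵐ ω ∂μ, 0 ≤ A ω) (hAle : ∀ᵐ ω ∂μ, A ω ≤ rhat)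
    (hAB : ∫ ω, (A ω - B ω) ^ 2 ∂μ ≤ εhat) :
    ∫ ω, (A ω / rhat - B ω / r) ^ 2 ∂μ
      ≤ εhat / r ^ 2 + 4 * η * Real.sqrt εhat / (r * (1 - η)) +
        4 * η ^ 2 / (1 - η) ^ 2 := by
  have hrpos : 0 < r := (mul_pos hrbar (by linarith [hη.2])).trans_le hr.1
  have hεhat : 0 ≤ εhat := (integral_nonneg fun ω => sq_nonneg _).trans hAB
  have hsplit : ∀ ω, A ω / rhat - B ω / r = (A ω - B ω) / r + (A ω / rhat - A ω / r) := by
    intro ω; ring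
  have hrate : ∀ᵐ ω ∂μ, |A ω / rhat - A ω / r| ≤ 2 * η / (1 - η) := by
    filter_upwards [hA0, hAle] with ω h0 hle
    exact abs_div_sub_div_le_of_mem_Icc hη.2 hrbar hr hrhat h0 hle
  have hscaled : √(∫ ω, ((A ω - B ω) / r) ^ 2 ∂μ) ≤ √εhat / r := by
    simp_rw [div_pow]
    rw [integral_div, Real.sqrt_div' _ (sq_nonneg r), Real.sqrt_sq hrpos.le]
    gcongr
  calc ∫ ω, (A ω / rhat - B ω / r) ^ 2 ∂μ
      ≤ (√(∫ ω, ((A ω - B ω) / r) ^ 2 ∂μ) + 2 * η / (1 - η)) ^ 2 := by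
        simp_rw [hsplit]
        have hAB2 : MemLp (fun ω => (A ω - B ω) / r) 2 μ := by
          simpa only [div_eq_mul_inv, Pi.sub_apply] using (hA.sub hB).mul_const r⁻¹
        exact integral_sq_add_le_of_abs_le hAB2
          ((hA.aemeasurable.div_const _).sub (hA.aemeasurable.div_const _)).aestronglyMeasurable
          hrate
    _ ≤ (√εhat / r + 2 * η / (1 - η)) ^ 2 := by
        have : 0 ≤ 2 * η / (1 - η) := div_nonneg (by linarith [hη.1]) (by linarith [hη.2])
        gcongr
    _ = εhat / r ^ 2 + 4 * η * √εhat / (r * (1 - η)) + 4 * η ^ 2 / (1 - η) ^ 2 := by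
        have : 1 - η ≠ 0 := by linarith [hη.2]
        rw [add_sq, div_pow, Real.sq_sqrt hεhat]
        field_simp
        ring

/-- The key estimate for learning with an uncertain retention rate: if
`0 ≤ A ≤ r̂` a.e., `∫ (A − B)² ≤ ε̂`, and `r, r̂ ∈ [r̄(1−η), r̄(1+η)]`, then
`∫ (A/r̂ − B/r)² ≤ ε̂/r² + 4η√ε̂/(r(1−η)) + 4η²/(1−η)²`. -/
theorem rescaled_error_bound {Ω : Type*} [MeasurableSpace Ω] (μ : Measure Ω)
    [IsProbabilityMeasure μ] (η rbar r rhat εhat : ℝ)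
    (hη : η ∈ Set.Ioo (0 : ℝ) 1) (hrbar : 0 < rbar)
    (hr : r ∈ Set.Icc (rbar * (1 - η)) (rbar * (1 + η)))
    (hrhat : rhat ∈ Set.Icc (rbar * (1 - η)) (rbar * (1 + η)))
    (A B : Ω → ℝ) (hA : MemLp A 2 μ) (hB : MemLp B 2 μ)
    (hA0 : ∀ᵐ ω ∂μ, 0 ≤ A ω) (hAle : ∀ᵐ ω ∂μ, A ω ≤ rhat)
    (hεhat : 0 ≤ εhat)
    (hAB : ∫ ω, (A ω - B ω) ^ 2 ∂μ ≤ εhat) :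
    ∫ ω, (A ω / rhat - B ω / r) ^ 2 ∂μ
      ≤ εhat / r ^ 2 + 4 * η * Real.sqrt εhat / (r * (1 - η)) +
        4 * η ^ 2 / (1 - η) ^ 2 :=
  rescaled_error_bound_general μ η rbar r rhat εhat hη hrbar hr hrhat A B hA hB hA0 hAle hAB
end

section
/- Let V be a finite node set with n = |V|, λ ∈ (0, 1/2), and w : V × V → ℝ satisfying: w(u,v) ≥ 0 for all u,v; for every v, 1 − Σ_{u ∈ V} w(u,v) ∈ [λ, 1−λ]; and w(u,v) ∈ [λ, 1−λ] whenever w(u,v) ≠ 0. Fix S ⊆ V and u₀ ∈ V. Then: (i) if u₀ is reachable from S in the directed graph with edge set {(u,v) : w(u,v) > 0} (i.e., u₀ ∈ S or some directed path of positive-weight edges leads from a node of S to u₀), then the live-edge DLT influence satisfies F^w_{u₀}(S) ≥ λ^n; and (ii) if u₀ ∉ S, then F^w_{u₀}(S) ≤ 1 − λ^n. -/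
open Classical

variable {V : Type*} [Fintype V] [DecidableEq V]

/-- A path survives updating `X` at `c`, unless `c` was on the path. -/
lemma dlt_update_path {X : V → Option V} {c : V} {b' : Option V} {s t : V}
    (h : Relation.ReflTransGen (fun a b => X b = some a) s t) :
    Relation.ReflTransGen (fun a b => Function.update X c b' b = some a) s t ∨
      Relation.ReflTransGen (fun a b => X b = some a) s c := by
  induction h with
  | refl => exact Or.inl Relation.ReflTransGen.refl
  | @tail m m' hsm hstep ih =>
    rcases ih with ih | ih
    · by_cases hm' : m' = c
      · subst hm'
        exact Or.inr (hsm.tail hstep)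
      · exact Or.inl (ih.tail (by rwa [Function.update_of_ne hm']))
    · exact Or.inr ih

lemma dlt_exists_good (w : V → V → ℝ) (S : Finset V) {s u₀ : V} (hs : s ∈ S)
    (h : Relation.ReflTransGen (fun a b => 0 < w a b) s u₀) :
    ∃ X : V → Option V, dltReach X S u₀ ∧
      ∀ v, X v = none ∨ ∃ u, X v = some u ∧ 0 < w u v := by
  induction h with
  | refl => exact ⟨fun _ => none, ⟨s, hs, Relation.ReflTransGen.refl⟩, fun _ => Or.inl rfl⟩
  | @tail b c hsb hbc ih =>
    obtain ⟨X, ⟨s', hs', hp⟩, hval⟩ := ih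
    by_cases hc : dltReach X S c
    · exact ⟨X, hc, hval⟩
    · refine ⟨Function.update X c (some b), ?_, ?_⟩
      · rcases dlt_update_path (c := c) (b' := some b) hp with h1 | h1
        · exact ⟨s', hs', h1.tail (by simp)⟩
        · exact absurd ⟨s', hs', h1⟩ hc
      · intro v
        by_cases hv : v = c
        · subst hv
          exact Or.inr ⟨b, by simp, hbc⟩
        · rw [Function.update_of_ne hv]; exact hval v

/-- With nonzero edge weights in `[λ, 1−λ]` and `1 − Σ_u w(u,v) ∈ [λ, 1−λ]` for every
`v`: (i) if `u₀` is reachable from `S` along positive-weight edges then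
`F^w_{u₀}(S) ≥ λ^n`, and (ii) if `u₀ ∉ S` then `F^w_{u₀}(S) ≤ 1 − λ^n`,
where `n = |V|`. -/
theorem dlt_influence_bounded_away (lam : ℝ) (hlam : lam ∈ Set.Ioo (0 : ℝ) (1 / 2))
    (w : V → V → ℝ) (hw0 : ∀ u v, 0 ≤ w u v)
    (hcol : ∀ v, (1 - ∑ u, w u v) ∈ Set.Icc lam (1 - lam))
    (hpos : ∀ u v, w u v ≠ 0 → w u v ∈ Set.Icc lam (1 - lam))
    (S : Finset V) (u₀ : V) :
    ((∃ s ∈ S, Relation.ReflTransGen (fun a b => 0 < w a b) s u₀) →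
        lam ^ Fintype.card V ≤ dltInf w S u₀) ∧
      (u₀ ∉ S → dltInf w S u₀ ≤ 1 - lam ^ Fintype.card V) := by
  obtain ⟨hlam0, hlam2⟩ := hlam
  have hQnn : ∀ (v : V) (o : Option V), 0 ≤ dltQ w v o := by
    rintro v (_ | u)
    · exact le_trans hlam0.le (hcol v).1
    · exact hw0 u v
  have hPnn : ∀ X : V → Option V, 0 ≤ dltProb w X := fun X =>
    Finset.prod_nonneg fun v _ => hQnn v (X v)
  have hsum1 : ∑ X : V → Option V, dltProb w X = 1 := by
    unfold dltProb
    rw [show (Finset.univ : Finset (V → Option V)) =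
        Fintype.piFinset (fun _ => Finset.univ) from (Fintype.piFinset_univ).symm,
      ← Finset.prod_univ_sum]
    refine Finset.prod_eq_one fun v _ => ?_
    rw [Fintype.sum_option]
    simp [dltQ]
  -- terms of the influence sum are between 0 and dltProb
  have hterm_nn : ∀ X : V → Option V,
      0 ≤ dltProb w X * (if dltReach X S u₀ then 1 else 0) := fun X => by
    split <;> simp [hPnn X]
  have hterm_le : ∀ X : V → Option V,
      dltProb w X * (if dltReach X S u₀ then 1 else 0) ≤ dltProb w X := fun X => by
    split <;> simp [hPnn X]
  constructor
  · rintro ⟨s, hs, hpath⟩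
    obtain ⟨X, hreach, hval⟩ := dlt_exists_good w S hs hpath
    have hPX : lam ^ Fintype.card V ≤ dltProb w X := by
      have : ∀ v ∈ Finset.univ, lam ≤ dltQ w v (X v) := by
        intro v _
        rcases hval v with h | ⟨u, h, hu⟩
        · rw [h]; exact (hcol v).1
        · rw [h]; exact (hpos u v (ne_of_gt hu)).1
      calc lam ^ Fintype.card V = ∏ _v : V, lam := by
            rw [Finset.prod_const, Finset.card_univ]
        _ ≤ dltProb w X := Finset.prod_le_prod (fun _ _ => hlam0.le) this
    calc lam ^ Fintype.card V ≤ dltProb w X := hPX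
      _ = dltProb w X * (if dltReach X S u₀ then 1 else 0) := by
            rw [if_pos hreach, mul_one]
      _ ≤ dltInf w S u₀ :=
            Finset.single_le_sum (fun X _ => hterm_nn X) (Finset.mem_univ X)
  · intro hu
    set X₀ : V → Option V := fun _ => none with hX₀
    have hnr : ¬ dltReach X₀ S u₀ := by
      rintro ⟨s, hs, hp⟩
      cases hp.cases_tail with
      | inl h => exact hu (h ▸ hs)
      | inr h => obtain ⟨m, _, hstep⟩ := h; simp [hX₀] at hstep
    have hP0 : lam ^ Fintype.card V ≤ dltProb w X₀ := by
      have : ∀ v ∈ Finset.univ, lam ≤ dltQ w v (X₀ v) := fun v _ => (hcol v).1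
      calc lam ^ Fintype.card V = ∏ _v : V, lam := by
            rw [Finset.prod_const, Finset.card_univ]
        _ ≤ dltProb w X₀ := Finset.prod_le_prod (fun _ _ => hlam0.le) this
    have hrw : 1 - dltInf w S u₀ =
        ∑ X : V → Option V, dltProb w X * (1 - if dltReach X S u₀ then 1 else 0) := by
      have h1 : ∑ X : V → Option V, dltProb w X * (1 - if dltReach X S u₀ then 1 else 0) =
          (∑ X : V → Option V, dltProb w X) -
            ∑ X : V → Option V, dltProb w X * (if dltReach X S u₀ then 1 else 0) := by
        rw [← Finset.sum_sub_distrib]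
        exact Finset.sum_congr rfl fun X _ => by ring
      rw [h1, hsum1]; rfl
    have key : dltProb w X₀ ≤ 1 - dltInf w S u₀ := by
      rw [hrw]
      have h0 : dltProb w X₀ = dltProb w X₀ * (1 - if dltReach X₀ S u₀ then 1 else 0) := by
        rw [if_neg hnr]; ring
      rw [h0]
      refine Finset.single_le_sum (f := fun X =>
        dltProb w X * (1 - if dltReach X S u₀ then 1 else 0)) (fun X _ => ?_)
        (Finset.mem_univ X₀)
      have : (0:ℝ) ≤ 1 - if dltReach X S u₀ then 1 else 0 := by split <;> norm_num
      exact mul_nonneg (hPnn X) this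
    linarith
end
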